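/- arXiv:2002.12264 — 4 statements merged into one kernel-verified Lean document; each statement's English description precedes it below -/
import Mathlib

section
/- Let 0 < p, q < ∞ and α > 0 with α < 1/p + 1/q. Then ∫₀^{2π} (∫₀¹ |1 - r e^{iθ}|^{-αp} dr)^{q/p} dθ < ∞. -/
open MeasureTheory Complex Real

/-!
For `‖w‖ = 1` and `0 ≤ r ≤ 1`, the distance `‖1 - r w‖` dominates both `1 - r` and
`‖1 - w‖ / 2`, which is `|sin (θ / 2)|` for `w = exp (θ I)`. Splitting the exponent as
`α p = β + β p / q` with `β = α / (1/p + 1/q) < 1` bounds the inner integral by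
`C · |sin (θ / 2)| ^ (-β p / q)`; raised to the power `q / p` this becomes `|sin (θ / 2)| ^ (-β)`,
which is integrable over `(0, 2π)` by Jordan's inequality because `β < 1`.
-/

lemma integrableOn_Ioo_sub_rpow {c s : ℝ} (hc : 0 < c) (hs : -1 < s) :
    IntegrableOn (fun x : ℝ ↦ (c - x) ^ s) (Set.Ioo 0 c) :=
  (intervalIntegrable_iff_integrableOn_Ioo_of_le hc.le).1 <| by
    simpa using
      ((intervalIntegral.intervalIntegrable_rpow' hs (a := 0) (b := c)).comp_sub_left c).symm

lemma one_sub_le_norm_one_sub_mul {w : ℂ} (hw : ‖w‖ = 1) {r : ℝ} (hr : 0 ≤ r) :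
    1 - r ≤ ‖1 - r * w‖ := by
  simpa [hw, abs_of_nonneg hr] using norm_sub_norm_le (1 : ℂ) (r * w)

lemma norm_one_sub_le_two_mul_norm_one_sub_mul {w : ℂ} (hw : ‖w‖ = 1) {r : ℝ} (hr₀ : 0 ≤ r)
    (hr₁ : r ≤ 1) : ‖1 - w‖ ≤ 2 * ‖1 - r * w‖ := by
  have hrw : ‖r * w - w‖ = 1 - r := by
    rw [← sub_one_mul, norm_mul, hw, mul_one, ← ofReal_one, ← ofReal_sub, norm_real,
      Real.norm_of_nonpos (by linarith), neg_sub]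
  calc ‖1 - w‖ ≤ ‖1 - r * w‖ + ‖r * w - w‖ := norm_sub_le_norm_sub_add_norm_sub _ _ _
    _ ≤ 2 * ‖1 - r * w‖ := by linarith [one_sub_le_norm_one_sub_mul hw hr₀]

lemma norm_one_sub_exp_mul_I (θ : ℝ) : ‖1 - exp (θ * I)‖ = 2 * |Real.sin (θ / 2)| := by
  rw [norm_sub_rev, mul_comm, norm_exp_I_mul_ofReal_sub_one, norm_mul, Real.norm_two,
    Real.norm_eq_abs]

lemma inv_pi_mul_le_abs_sin_half_or {θ : ℝ} (h₀ : 0 ≤ θ) (h₁ : θ ≤ 2 * π) :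
    π⁻¹ * θ ≤ |Real.sin (θ / 2)| ∨ π⁻¹ * (2 * π - θ) ≤ |Real.sin (θ / 2)| := by
  rcases le_total θ π with h | h
  · left
    have := mul_abs_le_abs_sin (x := θ / 2) (by rw [abs_of_nonneg (by linarith)]; linarith)
    rwa [abs_of_nonneg (by linarith), show 2 / π * (θ / 2) = π⁻¹ * θ by ring] at this
  · right
    have := mul_abs_le_abs_sin (x := θ / 2 - π) (by rw [abs_le]; constructor <;> linarith)
    rwa [Real.sin_sub_pi, abs_neg, abs_of_nonpos (by linarith),
      show 2 / π * -(θ / 2 - π) = π⁻¹ * (2 * π - θ) by field_simp; ring] at this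

lemma rpow_neg_add_le_mul {x u v a b : ℝ} (hu : 0 < u) (hux : u ≤ x) (hv : 0 < v) (hvx : v ≤ x)
    (ha : 0 ≤ a) (hb : 0 ≤ b) : x ^ (-(a + b)) ≤ u ^ (-a) * v ^ (-b) := by
  rw [neg_add, rpow_add (hu.trans_le hux)]
  exact mul_le_mul (rpow_le_rpow_of_nonpos hu hux (by linarith))
    (rpow_le_rpow_of_nonpos hv hvx (by linarith)) (rpow_nonneg (hv.le.trans hvx) _) (by positivity)

lemma rpow_neg_le_of_mul_le_or_mul_le {x c u v β : ℝ} (hc : 0 < c) (hu : 0 < u) (hv : 0 < v)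
    (hβ : 0 ≤ β) (h : c * u ≤ x ∨ c * v ≤ x) : x ^ (-β) ≤ c ^ (-β) * (u ^ (-β) + v ^ (-β)) := by
  rw [mul_add]
  rcases h with h | h
  · have := rpow_le_rpow_of_nonpos (by positivity) h (neg_nonpos.2 hβ)
    rw [mul_rpow hc.le hu.le] at this
    have : 0 ≤ c ^ (-β) * v ^ (-β) := by positivity
    linarith
  · have := rpow_le_rpow_of_nonpos (by positivity) h (neg_nonpos.2 hβ)
    rw [mul_rpow hc.le hv.le] at this
    have : 0 ≤ c ^ (-β) * u ^ (-β) := by positivity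
    linarith

lemma setLIntegral_norm_one_sub_mul_rpow_neg_le {w : ℂ} (hw : ‖w‖ = 1) (hw₁ : w ≠ 1) {a b : ℝ}
    (ha : 0 ≤ a) (hb : 0 ≤ b) :
    ∫⁻ r in Set.Ioo (0 : ℝ) 1, ENNReal.ofReal (‖1 - r * w‖ ^ (-(a + b))) ≤
      ENNReal.ofReal ((‖1 - w‖ / 2) ^ (-b)) *
        ∫⁻ r in Set.Ioo (0 : ℝ) 1, ENNReal.ofReal ((1 - r) ^ (-a)) := by
  rw [← lintegral_const_mul' _ _ ENNReal.ofReal_ne_top]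
  refine setLIntegral_mono' measurableSet_Ioo fun r ⟨hr₀, hr₁⟩ ↦ ?_
  rw [← ENNReal.ofReal_mul (by positivity), mul_comm ((‖1 - w‖ / 2) ^ (-b))]
  refine ENNReal.ofReal_le_ofReal <| rpow_neg_add_le_mul (sub_pos.2 hr₁)
    (one_sub_le_norm_one_sub_mul hw hr₀.le) (half_pos (norm_pos_iff.2 (sub_ne_zero.2 hw₁.symm)))
    ?_ ha hb
  linarith [norm_one_sub_le_two_mul_norm_one_sub_mul hw hr₀.le hr₁.le]

lemma setLIntegral_abs_sin_half_rpow_neg_lt_top {β : ℝ} (hβ₀ : 0 ≤ β) (hβ₁ : β < 1) :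
    ∫⁻ θ in Set.Ioo 0 (2 * π), ENNReal.ofReal (|Real.sin (θ / 2)| ^ (-β)) < ⊤ := by
  have hdom : IntegrableOn (fun θ ↦ π⁻¹ ^ (-β) * (θ ^ (-β) + (2 * π - θ) ^ (-β)))
      (Set.Ioo 0 (2 * π)) :=
    (((intervalIntegral.integrableOn_Ioo_rpow_iff two_pi_pos).2 (by linarith)).add
      (integrableOn_Ioo_sub_rpow two_pi_pos (by linarith))).const_mul _
  refine lt_of_le_of_lt (setLIntegral_mono' measurableSet_Ioo fun θ ⟨h₀, h₁⟩ ↦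
    ENNReal.ofReal_le_ofReal ?_) hdom.lintegral_lt_top
  exact rpow_neg_le_of_mul_le_or_mul_le (inv_pos.2 pi_pos) h₀ (by linarith) hβ₀
    (inv_pi_mul_le_abs_sin_half_or h₀.le h₁.le)

lemma setLIntegral_norm_one_sub_mul_exp_rpow_neg_rpow_le {θ : ℝ} (hθ : θ ∈ Set.Ioo 0 (2 * π))
    {β s : ℝ} (hβ : 0 ≤ β) (hs : 0 < s) :
    (∫⁻ r in Set.Ioo (0 : ℝ) 1, ENNReal.ofReal (‖1 - r * exp (θ * I)‖ ^ (-(β + β / s)))) ^ s ≤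
      ENNReal.ofReal (|Real.sin (θ / 2)| ^ (-β)) *
        (∫⁻ r in Set.Ioo (0 : ℝ) 1, ENNReal.ofReal ((1 - r) ^ (-β))) ^ s := by
  obtain ⟨h₀, h₁⟩ := hθ
  have hsin : 0 < Real.sin (θ / 2) := sin_pos_of_pos_of_lt_pi (by linarith) (by linarith)
  have hw₁ : exp (θ * I) ≠ 1 := fun h ↦ by
    simpa [h, hsin.ne'] using norm_one_sub_exp_mul_I θ
  have hinner := setLIntegral_norm_one_sub_mul_rpow_neg_le (norm_exp_ofReal_mul_I θ) hw₁ hβ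
    (by positivity : 0 ≤ β / s)
  rw [norm_one_sub_exp_mul_I, mul_div_cancel_left₀ _ two_ne_zero] at hinner
  calc _ ≤ (ENNReal.ofReal (|Real.sin (θ / 2)| ^ (-(β / s))) * _) ^ s :=
        ENNReal.rpow_le_rpow hinner hs.le
    _ = _ := by
      rw [ENNReal.mul_rpow_of_nonneg _ _ hs.le, ENNReal.ofReal_rpow_of_nonneg (by positivity) hs.le,
        ← rpow_mul (abs_nonneg _), neg_mul, div_mul_cancel₀ _ hs.ne']

/-- For `0 < p, q < ∞` and `0 < α < 1/p + 1/q`,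
`∫₀^{2π} (∫₀¹ |1 - r e^{iθ}|^{-αp} dr)^{q/p} dθ < ∞`. -/
theorem stmt_2 (p q α : ℝ) (hp : 0 < p) (hq : 0 < q) (hα0 : 0 < α)
    (hα : α < 1 / p + 1 / q) :
    (∫⁻ θ in Set.Ioo (0 : ℝ) (2 * Real.pi),
        (∫⁻ r in Set.Ioo (0:ℝ) 1,
            ENNReal.ofReal
              (‖(1 : ℂ) - (r : ℂ) * Complex.exp ((θ : ℂ) * Complex.I)‖ ^ (-(α * p))))
          ^ (q / p)) < ⊤ := by
  have hpq : 0 < 1 / p + 1 / q := by positivity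
  have hqp : 0 < q / p := by positivity
  set β := α / (1 / p + 1 / q) with hβ
  have hβ₀ : 0 < β := div_pos hα0 hpq
  have hβ₁ : β < 1 := (div_lt_one hpq).2 hα
  have hsplit : α * p = β + β / (q / p) := by rw [hβ]; field_simp
  set K := ∫⁻ r in Set.Ioo (0 : ℝ) 1, ENNReal.ofReal ((1 - r) ^ (-β))
  have hK : K < ⊤ := (integrableOn_Ioo_sub_rpow one_pos (by linarith)).lintegral_lt_top
  calc _ ≤ ∫⁻ θ in Set.Ioo 0 (2 * π), ENNReal.ofReal (|Real.sin (θ / 2)| ^ (-β)) * K ^ (q / p) :=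
        setLIntegral_mono' measurableSet_Ioo fun θ hθ ↦ hsplit ▸
          setLIntegral_norm_one_sub_mul_exp_rpow_neg_rpow_le hθ hβ₀.le hqp
    _ = (∫⁻ θ in Set.Ioo 0 (2 * π), ENNReal.ofReal (|Real.sin (θ / 2)| ^ (-β))) * K ^ (q / p) :=
        lintegral_mul_const' _ _ (ENNReal.rpow_ne_top_of_nonneg hqp.le hK.ne)
    _ < ⊤ := ENNReal.mul_lt_top (setLIntegral_abs_sin_half_rpow_neg_lt_top hβ₀.le hβ₁)
        (ENNReal.rpow_lt_top_of_nonneg hqp.le hK.ne)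
end

section
/- Let 0 < p, q < ∞ and α ≥ 1/p + 1/q. Then ∫₀^{2π} (∫₀¹ |1 - r e^{iθ}|^{-αp} dr)^{q/p} dθ = ∞. -/
/-!
Near `θ = 0` the point `1` is approached by `r e^{iθ}` for all `r ∈ (1 - θ, 1)`, where
`|1 - r e^{iθ}| ≤ 2θ`; hence the inner integral is at least `θ (2θ)^{-αp}`, and its `q/p`-th
power is at least a constant times `θ^{q/p - αq}`. Since `α ≥ 1/p + 1/q` the exponent is
`≤ -1`, so the outer integral already diverges at `θ = 0`.
-/

open MeasureTheory Complex Real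

lemma lintegral_Ioo_rpow_eq_top {s t : ℝ} (ht : 0 < t) (hs : s ≤ -1) :
    ∫⁻ x in Set.Ioo (0 : ℝ) t, ENNReal.ofReal (x ^ s) = ⊤ := by
  by_contra h
  have hint : IntegrableOn (fun x : ℝ => x ^ s) (Set.Ioo 0 t) := by
    refine ⟨(by fun_prop : Measurable fun x : ℝ => x ^ s).aestronglyMeasurable, ?_⟩
    refine (hasFiniteIntegral_iff_ofReal ?_).2 (lt_top_iff_ne_top.2 h)
    filter_upwards [ae_restrict_mem measurableSet_Ioo] with x hx
    exact rpow_nonneg hx.1.le s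
  linarith [(intervalIntegral.integrableOn_Ioo_rpow_iff ht).1 hint]

lemma lintegral_Ioo_const_mul_rpow_eq_top {c s t : ℝ} (hc : 0 < c) (ht : 0 < t)
    (hs : s ≤ -1) :
    ∫⁻ x in Set.Ioo (0 : ℝ) t, ENNReal.ofReal (c * x ^ s) = ⊤ := by
  simp_rw [ENNReal.ofReal_mul hc.le]
  rw [lintegral_const_mul' _ _ ENNReal.ofReal_ne_top, lintegral_Ioo_rpow_eq_top ht hs,
    ENNReal.mul_top (ENNReal.ofReal_pos.2 hc).ne']

lemma norm_one_sub_mul_exp_le {r : ℝ} (hr0 : 0 ≤ r) (hr1 : r ≤ 1) (θ : ℝ) :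
    ‖(1 : ℂ) - r * exp (θ * I)‖ ≤ (1 - r) + |θ| := by
  have hexp : ‖(1 : ℂ) - exp (θ * I)‖ ≤ |θ| := by
    rw [norm_sub_rev, mul_comm]
    exact norm_exp_I_mul_ofReal_sub_one_le
  calc ‖(1 : ℂ) - r * exp (θ * I)‖
        = ‖((1 - r : ℝ) : ℂ) + r * (1 - exp (θ * I))‖ := by push_cast; ring_nf
    _ ≤ (1 - r) + r * |θ| := by
        refine (norm_add_le _ _).trans (add_le_add ?_ ?_)
        · rw [norm_real, norm_of_nonneg (sub_nonneg.2 hr1)]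
        · rw [norm_mul, norm_real, norm_of_nonneg hr0]
          exact mul_le_mul_of_nonneg_left hexp hr0
    _ ≤ (1 - r) + |θ| := by nlinarith [abs_nonneg θ]

lemma norm_one_sub_mul_exp_pos {r : ℝ} (hr0 : 0 ≤ r) (hr1 : r < 1) (θ : ℝ) :
    0 < ‖(1 : ℂ) - r * exp (θ * I)‖ := by
  have h := norm_sub_norm_le (1 : ℂ) (r * exp (θ * I))
  rw [norm_one, norm_mul, norm_exp_ofReal_mul_I, mul_one, norm_real, norm_of_nonneg hr0] at h
  linarith

lemma lintegral_norm_one_sub_mul_exp_rpow_ge {β θ : ℝ} (hβ : 0 ≤ β)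
    (hθ : θ ∈ Set.Ioo 0 1) :
    ENNReal.ofReal (2 ^ (-β) * θ ^ (1 - β)) ≤
      ∫⁻ r in Set.Ioo (0 : ℝ) 1,
        ENNReal.ofReal (‖(1 : ℂ) - r * exp (θ * I)‖ ^ (-β)) := by
  obtain ⟨hθ0, hθ1⟩ := hθ
  have hbound : ∀ r ∈ Set.Ioo (1 - θ) 1,
      ENNReal.ofReal ((2 * θ) ^ (-β)) ≤
        ENNReal.ofReal (‖(1 : ℂ) - r * exp (θ * I)‖ ^ (-β)) := by
    rintro r ⟨hr0, hr1⟩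
    refine ENNReal.ofReal_le_ofReal (rpow_le_rpow_of_nonpos
      (norm_one_sub_mul_exp_pos (by linarith) hr1 θ) ?_ (neg_nonpos.2 hβ))
    linarith [norm_one_sub_mul_exp_le (by linarith) hr1.le θ, abs_of_pos hθ0]
  calc ENNReal.ofReal (2 ^ (-β) * θ ^ (1 - β))
      = ∫⁻ _ in Set.Ioo (1 - θ) 1, ENNReal.ofReal ((2 * θ) ^ (-β)) := by
        rw [setLIntegral_const, volume_Ioo, sub_sub_cancel,
          ← ENNReal.ofReal_mul (by positivity), mul_rpow zero_le_two hθ0.le, sub_eq_add_neg,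
          rpow_add hθ0, rpow_one]
        ring_nf
    _ ≤ ∫⁻ r in Set.Ioo (1 - θ) 1,
          ENNReal.ofReal (‖(1 : ℂ) - r * exp (θ * I)‖ ^ (-β)) :=
        setLIntegral_mono' measurableSet_Ioo hbound
    _ ≤ _ := lintegral_mono_set (Set.Ioo_subset_Ioo_left (by linarith))

lemma rpow_lintegral_norm_one_sub_mul_exp_rpow_ge {β γ θ : ℝ} (hβ : 0 ≤ β) (hγ : 0 ≤ γ)
    (hθ : θ ∈ Set.Ioo 0 1) :
    ENNReal.ofReal (2 ^ (-(β * γ)) * θ ^ ((1 - β) * γ)) ≤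
      (∫⁻ r in Set.Ioo (0 : ℝ) 1,
        ENNReal.ofReal (‖(1 : ℂ) - r * exp (θ * I)‖ ^ (-β))) ^ γ := by
  have h2 : (0 : ℝ) ≤ 2 ^ (-β) := by positivity
  have hθβ : 0 ≤ θ ^ (1 - β) := rpow_nonneg hθ.1.le _
  calc ENNReal.ofReal (2 ^ (-(β * γ)) * θ ^ ((1 - β) * γ))
      = ENNReal.ofReal (2 ^ (-β) * θ ^ (1 - β)) ^ γ := by
        rw [ENNReal.ofReal_rpow_of_nonneg (mul_nonneg h2 hθβ) hγ, mul_rpow h2 hθβ,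
          ← rpow_mul zero_le_two, ← rpow_mul hθ.1.le, neg_mul]
    _ ≤ _ := ENNReal.rpow_le_rpow (lintegral_norm_one_sub_mul_exp_rpow_ge hβ hθ) hγ

/-- For `0 < p, q < ∞` and `α ≥ 1/p + 1/q`,
`∫₀^{2π} (∫₀¹ |1 - r e^{iθ}|^{-αp} dr)^{q/p} dθ = ∞`. -/
theorem stmt_3 (p q α : ℝ) (hp : 0 < p) (hq : 0 < q)
    (hα : 1 / p + 1 / q ≤ α) :
    (∫⁻ θ in Set.Ioo (0 : ℝ) (2 * Real.pi),
        (∫⁻ r in Set.Ioo (0:ℝ) 1,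
            ENNReal.ofReal
              (‖(1 : ℂ) - (r : ℂ) * Complex.exp ((θ : ℂ) * Complex.I)‖ ^ (-(α * p))))
          ^ (q / p)) = ⊤ := by
  have hαp : 0 ≤ α * p := mul_nonneg ((by positivity : 0 < 1 / p + 1 / q).le.trans hα) hp.le
  have hexponent : (1 - α * p) * (q / p) ≤ -1 := by
    have : (1 - α * p) * (q / p) = -1 - (α - (1 / p + 1 / q)) * q := by field_simp; ring
    nlinarith
  rw [eq_top_iff]
  calc ⊤ = ∫⁻ θ in Set.Ioo (0 : ℝ) 1,
        ENNReal.ofReal (2 ^ (-(α * p * (q / p))) * θ ^ ((1 - α * p) * (q / p))) :=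
        (lintegral_Ioo_const_mul_rpow_eq_top (by positivity) one_pos hexponent).symm
    _ ≤ _ := setLIntegral_mono' measurableSet_Ioo fun θ hθ =>
        rpow_lintegral_norm_one_sub_mul_exp_rpow_ge hαp (by positivity) hθ
    _ ≤ _ := lintegral_mono_set (Set.Ioo_subset_Ioo_right (by linarith [pi_gt_three]))
end

section
/- Let 1 ≤ p, q < ∞ and suppose RM(p₀,q₀) ⊂ RM(p,q) with a norm inequality ρ_{p,q}(f) ≤ C ρ_{p₀,q₀}(f) for all f ∈ RM(p₀,q₀) and some constant C > 0. Then p₀ ≥ p. -/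
/-!
Test the inequality on the monomials `z ^ n`: their mixed norm
`ρ_{p,q}(z ^ n) = (n p + 1) ^ (-1/p)` does not depend on `q`, so the inclusion forces
`(n p₀ + 1) ^ (1/p₀) ≤ C (n p + 1) ^ (1/p)` for all `n`. Hence
`n ^ (1/p₀ - 1/p)` stays bounded, which is only possible if `1/p₀ ≤ 1/p`.
-/

open MeasureTheory Complex Real ENNReal

/-- Radial `L^p` average `( ∫₀¹ |f(r e^{iθ})|^p dr )^{1/p}` (sup over `r` if `p = ∞`),
valued in `ℝ≥0∞`. -/
noncomputable def radialLp (p : ℝ≥0∞) (f : ℂ → ℂ) (θ : ℝ) : ℝ≥0∞ :=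
  if p = ⊤ then
    ⨆ r : Set.Ico (0 : ℝ) 1,
      ENNReal.ofReal ‖f ((r : ℝ) * Complex.exp ((θ : ℂ) * Complex.I))‖
  else
    (∫⁻ r in Set.Ioo (0:ℝ) 1,
        ENNReal.ofReal
          (‖f ((r : ℝ) * Complex.exp ((θ : ℂ) * Complex.I))‖ ^ p.toReal)) ^ (1 / p.toReal)

/-- The mixed norm `ρ_{p,q}(f)`, valued in `ℝ≥0∞`; for `q < ∞` it is
`((1/2π) ∫₀^{2π} (radial L^p average)^q dθ)^{1/q}`, and for `q = ∞` the essential/radial sup. -/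
noncomputable def rhoE (p q : ℝ≥0∞) (f : ℂ → ℂ) : ℝ≥0∞ :=
  if q = ⊤ then ⨆ θ : Set.Ico (0 : ℝ) (2 * Real.pi), radialLp p f (θ : ℝ)
  else
    ((ENNReal.ofReal (2 * Real.pi))⁻¹ *
        ∫⁻ θ in Set.Ioo (0 : ℝ) (2 * Real.pi), (radialLp p f θ) ^ q.toReal) ^ (1 / q.toReal)

lemma lintegral_Ioo_zero_one_ofReal_rpow {c : ℝ} (hc : -1 < c) :
    ∫⁻ r in Set.Ioo (0 : ℝ) 1, ENNReal.ofReal (r ^ c) = ENNReal.ofReal (c + 1)⁻¹ := by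
  have hint : IntegrableOn (fun r : ℝ => r ^ c) (Set.Ioo 0 1) :=
    ((intervalIntegrable_iff_integrableOn_Ioc_of_le zero_le_one).mp
      (intervalIntegral.intervalIntegrable_rpow' hc)).mono_set Set.Ioo_subset_Ioc_self
  rw [← ofReal_integral_eq_lintegral_ofReal hint
      ((ae_restrict_iff' measurableSet_Ioo).2 (.of_forall fun r hr => rpow_nonneg hr.1.le c)),
    ← integral_Ioc_eq_integral_Ioo, ← intervalIntegral.integral_of_le zero_le_one,
    integral_rpow (.inl hc), Real.one_rpow, zero_rpow (by linarith), sub_zero, one_div]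

lemma radialLp_pow {p : ℝ} (hp : 0 < p) (n : ℕ) (θ : ℝ) :
    radialLp (ENNReal.ofReal p) (· ^ n) θ = ENNReal.ofReal ((n * p + 1) ^ (-(1 / p))) := by
  have hnorm : ∀ r ∈ Set.Ioo (0 : ℝ) 1,
      ENNReal.ofReal (‖((r : ℂ) * exp (θ * I)) ^ n‖ ^ p) = ENNReal.ofReal (r ^ (n * p)) := by
    intro r hr
    rw [norm_pow, norm_mul, norm_real, Real.norm_of_nonneg hr.1.le, norm_exp_ofReal_mul_I,
      mul_one, ← Real.rpow_natCast, ← rpow_mul hr.1.le]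
  rw [radialLp, if_neg ofReal_ne_top, toReal_ofReal hp.le,
    setLIntegral_congr_fun measurableSet_Ioo hnorm,
    lintegral_Ioo_zero_one_ofReal_rpow (neg_one_lt_zero.trans_le (by positivity)),
    ofReal_rpow_of_nonneg (by positivity) (by positivity),
    Real.rpow_neg (by positivity), Real.inv_rpow (by positivity)]

lemma rhoE_pow {p q : ℝ} (hp : 0 < p) (hq : 0 < q) (n : ℕ) :
    rhoE (ENNReal.ofReal p) (ENNReal.ofReal q) (· ^ n) =
      ENNReal.ofReal ((n * p + 1) ^ (-(1 / p))) := by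
  have h2π : ENNReal.ofReal (2 * π) ≠ 0 := (ENNReal.ofReal_pos.2 two_pi_pos).ne'
  rw [rhoE, if_neg ofReal_ne_top, toReal_ofReal hq.le]
  simp_rw [radialLp_pow hp n]
  rw [setLIntegral_const, Real.volume_Ioo, sub_zero, mul_left_comm,
    ENNReal.inv_mul_cancel h2π ofReal_ne_top, mul_one, ← ENNReal.rpow_mul,
    mul_one_div_cancel hq.ne', ENNReal.rpow_one]

lemma nonpos_of_eventually_natCast_rpow_le {a K : ℝ}
    (h : ∀ᶠ n : ℕ in Filter.atTop, (n : ℝ) ^ a ≤ K) : a ≤ 0 := by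
  by_contra! ha
  obtain ⟨n, hle, hgt⟩ := (h.and (((tendsto_rpow_atTop ha).comp
    tendsto_natCast_atTop_atTop).eventually_gt_atTop K)).exists
  exact hle.not_gt hgt

lemma le_of_forall_rpow_neg_le {p p₀ C : ℝ} (hp : 0 < p) (hp₀ : 0 < p₀)
    (h : ∀ n : ℕ, (n * p + 1) ^ (-(1 / p)) ≤ C * (n * p₀ + 1) ^ (-(1 / p₀))) :
    p ≤ p₀ := by
  have hC : 1 ≤ C := by simpa using h 0
  have hgrowth : ∀ n : ℕ, (n * p₀ + 1) ^ (1 / p₀) ≤ C * (n * p + 1) ^ (1 / p) := by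
    intro n
    have hn := h n
    rw [rpow_neg (by positivity), rpow_neg (by positivity), ← div_eq_mul_inv,
      le_div_iff₀ (by positivity), inv_mul_le_iff₀ (by positivity)] at hn
    linarith
  rw [← one_div_le_one_div hp₀ hp, ← sub_nonpos]
  refine nonpos_of_eventually_natCast_rpow_le
    (K := C * (p + 1) ^ (1 / p) / p₀ ^ (1 / p₀))
    ((Filter.eventually_ge_atTop 1).mono fun n hn => ?_)
  have hn : (1 : ℝ) ≤ n := by exact_mod_cast hn
  rw [rpow_sub (by positivity), le_div_iff₀ (by positivity), div_mul_eq_mul_div,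
    div_le_iff₀ (by positivity)]
  calc (n : ℝ) ^ (1 / p₀) * p₀ ^ (1 / p₀)
      = (n * p₀) ^ (1 / p₀) := (mul_rpow (by positivity) hp₀.le).symm
    _ ≤ (n * p₀ + 1) ^ (1 / p₀) := by gcongr; linarith
    _ ≤ C * (n * p + 1) ^ (1 / p) := hgrowth n
    _ ≤ C * ((p + 1) * n) ^ (1 / p) := by gcongr; nlinarith
    _ = C * (p + 1) ^ (1 / p) * (n : ℝ) ^ (1 / p) := by
      rw [mul_rpow (by positivity) (by positivity), mul_assoc]

theorem stmt_6_general (p q p₀ q₀ C : ℝ) (hp : 1 ≤ p) (hq : 1 ≤ q) (hp₀ : 1 ≤ p₀) (hq₀ : 1 ≤ q₀)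
    (hincl : ∀ f : ℂ → ℂ, DifferentiableOn ℂ f (Metric.ball (0 : ℂ) 1) →
      rhoE (ENNReal.ofReal p₀) (ENNReal.ofReal q₀) f ≠ ⊤ →
      rhoE (ENNReal.ofReal p) (ENNReal.ofReal q) f
        ≤ ENNReal.ofReal C * rhoE (ENNReal.ofReal p₀) (ENNReal.ofReal q₀) f) :
    p ≤ p₀ := by
  have hp' : 0 < p := by linarith
  have hp₀' : 0 < p₀ := by linarith
  refine le_of_forall_rpow_neg_le (C := C) hp' hp₀' fun n => ?_
  have hn := hincl (· ^ n) (differentiable_pow n).differentiableOn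
    (by rw [rhoE_pow hp₀' (by linarith) n]; exact ofReal_ne_top)
  rw [rhoE_pow hp' (by linarith) n, rhoE_pow hp₀' (by linarith) n,
    ← ENNReal.ofReal_mul' (by positivity), ENNReal.ofReal_le_ofReal_iff'] at hn
  exact hn.resolve_right (not_le.2 (by positivity))

/-- If `1 ≤ p, q < ∞`, `1 ≤ p₀, q₀ < ∞` and `RM(p₀,q₀) ⊆ RM(p,q)` with a norm inequality
`ρ_{p,q}(f) ≤ C ρ_{p₀,q₀}(f)`, then `p₀ ≥ p`. -/
theorem stmt_6 (p q p₀ q₀ C : ℝ) (hp : 1 ≤ p) (hq : 1 ≤ q) (hp₀ : 1 ≤ p₀) (hq₀ : 1 ≤ q₀)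
    (hC : 0 < C)
    (hincl : ∀ f : ℂ → ℂ, DifferentiableOn ℂ f (Metric.ball (0 : ℂ) 1) →
      rhoE (ENNReal.ofReal p₀) (ENNReal.ofReal q₀) f ≠ ⊤ →
      rhoE (ENNReal.ofReal p) (ENNReal.ofReal q) f
        ≤ ENNReal.ofReal C * rhoE (ENNReal.ofReal p₀) (ENNReal.ofReal q₀) f) :
    p ≤ p₀ :=
  stmt_6_general p q p₀ q₀ C hp hq hp₀ hq₀ hincl
end

section
/- Let 1 ≤ p < ∞. There exists a bounded linear operator T : ℓ^∞ → RM(p,∞) which is an isomorphism onto its range; in particular RM(p,∞) contains a subspace isomorphic to ℓ^∞ and is non-separable. -/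
open MeasureTheory Complex Real ENNReal

/-!
Each building block `f_k` is a weighted double pole `ε_k (z e^{-iθ_k} - a_k)^{-2}` sitting just
outside the unit circle. The weight `ε_k = (a_k - 1)^{2 - 1/p}` makes the radial `L^p` norm of
`f_k` at most `1` along every ray and at least `1/4` along its own ray `θ_k`. The angles
`θ_k = 2^{-k}` are separated at scale `2^{-k}`, whereas the poles approach the circle at the much
faster rate `1000^{-k}`; hence every ray stays away from all poles but at most one, and along it
the other blocks add up to at most `‖α‖/15` in sup norm. So along any ray `F = ∑ α_k f_k` is a
single term `α_j f_j` up to that error, and Minkowski's inequality gives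
`‖α‖/20 ≤ ρ_{p,∞}(F) ≤ 2‖α‖`, the lower bound by choosing `j` with `|α_j| ≥ ‖α‖/2`.
-/

open Set Metric

noncomputable section

def ray (θ r : ℝ) : ℂ := (r : ℂ) * Complex.exp ((θ : ℂ) * Complex.I)

lemma continuous_ray (θ : ℝ) : Continuous (ray θ) := by
  unfold ray; fun_prop

lemma norm_ray (θ : ℝ) {r : ℝ} (hr : 0 ≤ r) : ‖ray θ r‖ = r := by
  simp [ray, Complex.norm_exp_ofReal_mul_I, abs_of_nonneg hr]

lemma mapsTo_ray_Ioo_ball (θ : ℝ) : MapsTo (ray θ) (Ioo 0 1) (ball 0 1) := fun r hr => by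
  rw [mem_ball_zero_iff, norm_ray θ hr.1.le]
  exact hr.2

lemma ray_mul_exp_neg (θ φ r : ℝ) :
    ray θ r * Complex.exp (-(φ : ℂ) * Complex.I) = ray (θ - φ) r := by
  rw [ray, ray, mul_assoc, ← Complex.exp_add]
  push_cast
  ring_nf

lemma radialLp_ofReal_eq_eLpNorm {p : ℝ} (hp : 0 < p) (f : ℂ → ℂ) (θ : ℝ) :
    radialLp (ENNReal.ofReal p) f θ
      = eLpNorm (f ∘ ray θ) (ENNReal.ofReal p) (volume.restrict (Ioo 0 1)) := by
  rw [eLpNorm_eq_lintegral_rpow_enorm_toReal (by simpa using hp) ofReal_ne_top, radialLp,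
    if_neg ofReal_ne_top, toReal_ofReal hp.le]
  congr 1
  refine setLIntegral_congr_fun measurableSet_Ioo fun r _ => ?_
  rw [← ofReal_rpow_of_nonneg (norm_nonneg _) hp.le, ofReal_norm]
  rfl

lemma rhoE_top (p : ℝ≥0∞) (f : ℂ → ℂ) :
    rhoE p ⊤ f = ⨆ θ : Ico (0 : ℝ) (2 * π), radialLp p f θ :=
  if_pos rfl

lemma radialLp_ofReal_const_mul {p : ℝ} (hp : 0 < p) (c : ℂ) (f : ℂ → ℂ) (θ : ℝ) :
    radialLp (ENNReal.ofReal p) (fun z => c * f z) θ = ‖c‖ₑ * radialLp (ENNReal.ofReal p) f θ := by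
  rw [radialLp_ofReal_eq_eLpNorm hp, radialLp_ofReal_eq_eLpNorm hp]
  exact eLpNorm_const_smul c (f ∘ ray θ) _ _

lemma radialLp_le_radialLp_add {p : ℝ} (hp : 1 ≤ p) {f g : ℂ → ℂ}
    (hf : ContinuousOn f (ball 0 1)) (hg : ContinuousOn g (ball 0 1)) {θ C : ℝ}
    (hfg : ∀ r ∈ Ioo (0 : ℝ) 1, ‖f (ray θ r) - g (ray θ r)‖ ≤ C) :
    radialLp (ENNReal.ofReal p) f θ ≤ radialLp (ENNReal.ofReal p) g θ + ENNReal.ofReal C := by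
  have hmeas : ∀ h : ℂ → ℂ, ContinuousOn h (ball 0 1) →
      AEStronglyMeasurable (h ∘ ray θ) (volume.restrict (Ioo 0 1)) := fun h hh =>
    (hh.comp (continuous_ray θ).continuousOn (mapsTo_ray_Ioo_ball θ)).aestronglyMeasurable
      measurableSet_Ioo
  have hdiff : eLpNorm (f ∘ ray θ - g ∘ ray θ) (ENNReal.ofReal p) (volume.restrict (Ioo 0 1))
      ≤ ENNReal.ofReal C := by
    refine (eLpNorm_le_of_ae_bound (C := C) ?_).trans_eq ?_
    · filter_upwards [ae_restrict_mem measurableSet_Ioo] with r hr using hfg r hr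
    · simp
  rw [radialLp_ofReal_eq_eLpNorm (by linarith), radialLp_ofReal_eq_eLpNorm (by linarith)]
  calc eLpNorm (f ∘ ray θ) (ENNReal.ofReal p) (volume.restrict (Ioo 0 1))
      = eLpNorm (g ∘ ray θ + (f ∘ ray θ - g ∘ ray θ)) (ENNReal.ofReal p)
          (volume.restrict (Ioo 0 1)) := by rw [add_sub_cancel]
    _ ≤ _ := eLpNorm_add_le (hmeas g hg) ((hmeas f hf).sub (hmeas g hg)) (by simpa using hp)
    _ ≤ _ := by gcongr

lemma sub_norm_le_norm_sub_ofReal (z : ℂ) (a : ℝ) : a - ‖z‖ ≤ ‖z - a‖ := by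
  rw [norm_sub_rev]
  exact (sub_le_sub_right (le_abs_self a) _).trans (by simpa using norm_sub_norm_le (a : ℂ) z)

lemma norm_mul_exp_neg_ofReal_mul_I (z : ℂ) (t : ℝ) :
    ‖z * Complex.exp (-(t : ℂ) * Complex.I)‖ = ‖z‖ := by
  simp [Complex.norm_exp]

lemma abs_sin_le_norm_ray_sub (θ r : ℝ) {a : ℝ} (ha : 1 ≤ a) : |Real.sin θ| ≤ ‖ray θ r - a‖ := by
  have hrot : ray θ r - a
      = Complex.exp (θ * Complex.I) * (r - a * Complex.exp (-(θ * Complex.I))) := by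
    rw [mul_sub, mul_left_comm, ← Complex.exp_add, add_neg_cancel, Complex.exp_zero, mul_one, ray,
      mul_comm]
  have him : ((r : ℂ) - a * Complex.exp (-(θ * Complex.I))).im = a * Real.sin θ := by
    simp [Complex.exp_im]
  rw [hrot, norm_mul, Complex.norm_exp_ofReal_mul_I, one_mul]
  calc |Real.sin θ| ≤ |a * Real.sin θ| := by
        rw [abs_mul]; exact le_mul_of_one_le_left (abs_nonneg _) (ha.trans (le_abs_self a))
    _ ≤ _ := him ▸ Complex.abs_im_le_norm _

lemma abs_sin_sub_le (x y : ℝ) : |Real.sin (x - y)| ≤ |Real.sin x| + |Real.sin y| := by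
  rw [Real.sin_sub]
  refine (abs_sub _ _).trans ?_
  rw [abs_mul, abs_mul]
  gcongr
  · exact mul_le_of_le_one_right (abs_nonneg _) (Real.abs_cos_le_one y)
  · exact mul_le_of_le_one_left (abs_nonneg _) (Real.abs_cos_le_one x)

lemma lintegral_sub_rpow_neg_le {a q : ℝ} (ha : 1 < a) (hq : 2 ≤ q) :
    ∫⁻ r in Ioo (0 : ℝ) 1, ENNReal.ofReal ((a - r) ^ (-q))
      ≤ ENNReal.ofReal ((a - 1) ^ (1 - q)) := by
  have hpos : ∀ r ∈ Icc (0 : ℝ) 1, 0 < a - r := fun r hr => by linarith [hr.2]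
  have hint : IntegrableOn (fun r : ℝ => (a - r) ^ (-q)) (Ioo 0 1) :=
    (ContinuousOn.rpow_const (by fun_prop) fun r hr => Or.inl (hpos r hr).ne')
      |>.integrableOn_Icc.mono_set Ioo_subset_Icc_self
  rw [← ofReal_integral_eq_lintegral_ofReal hint (ae_restrict_of_forall_mem measurableSet_Ioo
    fun r hr => Real.rpow_nonneg (hpos r (Ioo_subset_Icc_self hr)).le _)]
  have h0 : (0 : ℝ) ∉ uIcc (a - 1) (a - 0) := by
    rw [uIcc_of_le (by linarith)]
    exact fun h => by linarith [h.1]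
  rw [← integral_Ioc_eq_integral_Ioo, ← intervalIntegral.integral_of_le zero_le_one,
    intervalIntegral.integral_comp_sub_left (fun x => x ^ (-q)) a,
    integral_rpow (Or.inr ⟨by linarith, h0⟩)]
  refine ENNReal.ofReal_le_ofReal ?_
  have h1 := Real.rpow_pos_of_pos (by linarith : 0 < a - 1) (-q + 1)
  have h2 := Real.rpow_pos_of_pos (by linarith : 0 < a - 0) (-q + 1)
  rw [div_le_iff_of_neg (by linarith), show 1 - q = -q + 1 by ring]
  nlinarith

lemma eLpNorm_inv_sub_sq_le {p a : ℝ} (hp : 1 ≤ p) (ha : 1 < a) :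
    eLpNorm (fun r : ℝ => ((a - r) ^ 2)⁻¹) (ENNReal.ofReal p) (volume.restrict (Ioo 0 1))
      ≤ ENNReal.ofReal ((a - 1) ^ (1 / p - 2)) := by
  have hp0 : 0 < p := by linarith
  rw [eLpNorm_eq_lintegral_rpow_enorm_toReal (by simpa using hp0) ofReal_ne_top,
    toReal_ofReal hp0.le]
  have hpt : ∫⁻ r in Ioo 0 1, ‖((a - r) ^ 2)⁻¹‖ₑ ^ p
      = ∫⁻ r in Ioo 0 1, ENNReal.ofReal ((a - r) ^ (-(2 * p))) := by
    refine setLIntegral_congr_fun measurableSet_Ioo fun r hr => ?_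
    have har : 0 < a - r := by linarith [hr.2]
    rw [← ofReal_norm, ofReal_rpow_of_nonneg (norm_nonneg _) hp0.le,
      Real.norm_of_nonneg (by positivity), ← Real.rpow_two, ← Real.rpow_neg_one,
      ← Real.rpow_mul har.le, ← Real.rpow_mul har.le]
    ring_nf
  rw [hpt]
  calc (∫⁻ r in Ioo 0 1, ENNReal.ofReal ((a - r) ^ (-(2 * p)))) ^ (1 / p)
      ≤ ENNReal.ofReal ((a - 1) ^ (1 - 2 * p)) ^ (1 / p) := by
        gcongr
        exact lintegral_sub_rpow_neg_le ha (by linarith)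
    _ = ENNReal.ofReal ((a - 1) ^ (1 / p - 2)) := by
        rw [ofReal_rpow_of_nonneg (by positivity) (by positivity),
          ← Real.rpow_mul (by linarith)]
        congr 2
        field_simp

lemma norm_tsum_sub_le_of_forall_ne {ι E : Type*} [NormedAddCommGroup E] {f : ι → E}
    (hf : Summable f) {g : ι → ℝ} {B : ℝ} (hg : HasSum g B) (j : ι) (hgj : 0 ≤ g j)
    (h : ∀ k ≠ j, ‖f k‖ ≤ g k) : ‖∑' k, f k - f j‖ ≤ B := by
  classical
  refine (hasSum_ite_sub_hasSum hf.hasSum j).norm_le_of_bounded hg fun k => ?_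
  split_ifs with hk
  · simpa [hk] using hgj
  · exact h k hk

lemma exists_half_norm_le_norm_apply {ι : Type*} [Nonempty ι] {E : ι → Type*}
    [∀ i, NormedAddCommGroup (E i)] (α : lp E ⊤) : ∃ j, ‖α‖ / 2 ≤ ‖α j‖ := by
  rcases (norm_nonneg α).eq_or_lt with h | h
  · exact ⟨Classical.arbitrary ι, by rw [← h]; simp⟩
  · have : ‖α‖ / 2 < ⨆ k, ‖α k‖ := by rw [← lp.norm_eq_ciSup]; linarith
    obtain ⟨j, hj⟩ := exists_lt_of_lt_ciSup this
    exact ⟨j, hj.le⟩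

-- `peak p k` is the paper's `f_k` with `a_k = 1 + peakGap k`, `θ_k = peakAngle k` and
-- `ε_k = peakWeight p k`.
def peakGap (k : ℕ) : ℝ := 1000⁻¹ ^ (k + 1)

def peakAngle (k : ℕ) : ℝ := 2⁻¹ ^ k

def peakWeight (p : ℝ) (k : ℕ) : ℝ := peakGap k ^ (2 - 1 / p)

def peak (p : ℝ) (k : ℕ) (z : ℂ) : ℂ :=
  peakWeight p k * ((z * Complex.exp (-(peakAngle k : ℂ) * Complex.I) - (1 + peakGap k : ℝ)) ^ 2)⁻¹

lemma peakGap_pos (k : ℕ) : 0 < peakGap k := by unfold peakGap; positivity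

lemma peakGap_le_one (k : ℕ) : peakGap k ≤ 1 := pow_le_one₀ (by norm_num) (by norm_num)

lemma summable_peakGap : Summable peakGap :=
  (summable_nat_add_iff 1).2 (summable_geometric_of_lt_one (by norm_num) (by norm_num))

lemma peakWeight_pos (p : ℝ) (k : ℕ) : 0 < peakWeight p k := Real.rpow_pos_of_pos (peakGap_pos k) _

lemma peakWeight_le_peakGap {p : ℝ} (hp : 1 ≤ p) (k : ℕ) : peakWeight p k ≤ peakGap k := by
  have h : 1 / p ≤ 1 := by rw [div_le_one (by linarith)]; exact hp
  calc peakWeight p k ≤ peakGap k ^ (1 : ℝ) :=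
        Real.rpow_le_rpow_of_exponent_ge (peakGap_pos k) (peakGap_le_one k) (by linarith)
    _ = peakGap k := Real.rpow_one _

lemma peakAngle_mem_Ico (k : ℕ) : peakAngle k ∈ Ico 0 (2 * π) :=
  ⟨by unfold peakAngle; positivity,
    (pow_le_one₀ (by norm_num) (by norm_num)).trans_lt (by linarith [Real.pi_gt_three])⟩

lemma half_le_abs_peakAngle_sub {j k : ℕ} (hjk : j ≠ k) :
    2⁻¹ ^ k / 2 ≤ |peakAngle j - peakAngle k| := by
  unfold peakAngle
  have := pow_pos (by norm_num : (0 : ℝ) < 2⁻¹) k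
  have := pow_pos (by norm_num : (0 : ℝ) < 2⁻¹) j
  rcases hjk.lt_or_gt with h | h
  · have : (2⁻¹ : ℝ) ^ k ≤ 2⁻¹ ^ (j + 1) := pow_le_pow_of_le_one (by norm_num) (by norm_num) h
    rw [pow_succ] at this
    rw [abs_of_nonneg (by linarith)]
    linarith
  · have : (2⁻¹ : ℝ) ^ j ≤ 2⁻¹ ^ (k + 1) := pow_le_pow_of_le_one (by norm_num) (by norm_num) h
    rw [pow_succ] at this
    rw [abs_of_nonpos (by linarith)]
    linarith

lemma quarter_le_abs_sin_peakAngle_sub {j k : ℕ} (hjk : j ≠ k) :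
    2⁻¹ ^ k / 4 ≤ |Real.sin (peakAngle j - peakAngle k)| := by
  have hle : |peakAngle j - peakAngle k| ≤ 1 := by
    unfold peakAngle
    rw [abs_sub_le_iff]
    constructor <;> linarith [pow_le_one₀ (n := j) (by norm_num : (0 : ℝ) ≤ 2⁻¹) (by norm_num),
      pow_le_one₀ (n := k) (by norm_num : (0 : ℝ) ≤ 2⁻¹) (by norm_num),
      pow_pos (by norm_num : (0 : ℝ) < 2⁻¹) j, pow_pos (by norm_num : (0 : ℝ) < 2⁻¹) k]
  have hsin := Real.mul_abs_le_abs_sin (hle.trans (by linarith [Real.pi_gt_three]))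
  have hsep := half_le_abs_peakAngle_sub hjk
  have h2π : 1 / 2 ≤ 2 / π := by
    rw [div_le_div_iff₀ (by norm_num) Real.pi_pos]
    linarith [Real.pi_lt_four]
  nlinarith [abs_nonneg (peakAngle j - peakAngle k)]

def AwayFromPeak (θ : ℝ) (k : ℕ) : Prop := 2⁻¹ ^ k / 8 ≤ |Real.sin (θ - peakAngle k)|

lemma awayFromPeak_peakAngle {j k : ℕ} (hjk : j ≠ k) : AwayFromPeak (peakAngle j) k :=
  le_trans (by linarith [pow_pos (by norm_num : (0 : ℝ) < 2⁻¹) k])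
    (quarter_le_abs_sin_peakAngle_sub hjk)

lemma exists_forall_ne_awayFromPeak (θ : ℝ) : ∃ j, ∀ k ≠ j, AwayFromPeak θ k := by
  by_cases hclose : ∃ j, |Real.sin (θ - peakAngle j)| < 2⁻¹ ^ j / 8
  · obtain ⟨j, hj⟩ := hclose
    -- a second index close to `θ` would contradict the separation of the angles
    refine ⟨j, fun k hkj => le_of_not_gt fun hk => ?_⟩
    have hsub := abs_sin_sub_le (θ - peakAngle j) (θ - peakAngle k)
    rw [show θ - peakAngle j - (θ - peakAngle k) = peakAngle k - peakAngle j by ring] at hsub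
    have hj' := quarter_le_abs_sin_peakAngle_sub hkj
    have hk' := quarter_le_abs_sin_peakAngle_sub hkj.symm
    rw [← abs_neg, ← Real.sin_neg, neg_sub] at hk'
    linarith
  · push Not at hclose
    exact ⟨0, fun k _ => hclose k⟩

lemma norm_peak (p : ℝ) (k : ℕ) (z : ℂ) :
    ‖peak p k z‖ = peakWeight p k
      / ‖z * Complex.exp (-(peakAngle k : ℂ) * Complex.I) - (1 + peakGap k : ℝ)‖ ^ 2 := by
  rw [peak, norm_mul, norm_inv, norm_pow, Complex.norm_real, Real.norm_eq_abs,
    abs_of_pos (peakWeight_pos p k), div_eq_mul_inv]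

lemma one_add_peakGap_sub_norm_le (k : ℕ) (z : ℂ) :
    1 + peakGap k - ‖z‖
      ≤ ‖z * Complex.exp (-(peakAngle k : ℂ) * Complex.I) - (1 + peakGap k : ℝ)‖ := by
  simpa only [norm_mul_exp_neg_ofReal_mul_I] using
    sub_norm_le_norm_sub_ofReal (z * Complex.exp (-(peakAngle k : ℂ) * Complex.I)) (1 + peakGap k)

lemma norm_peak_le (p : ℝ) (k : ℕ) {z : ℂ} (hz : ‖z‖ < 1 + peakGap k) :
    ‖peak p k z‖ ≤ peakWeight p k / (1 + peakGap k - ‖z‖) ^ 2 := by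
  rw [norm_peak]
  have := one_add_peakGap_sub_norm_le k z
  have := peakWeight_pos p k
  gcongr

lemma norm_peak_le_of_norm_le {p : ℝ} (hp : 1 ≤ p) (k : ℕ) {z : ℂ} {R : ℝ} (hR : R < 1)
    (hz : ‖z‖ ≤ R) : ‖peak p k z‖ ≤ peakGap k / (1 - R) ^ 2 := by
  have := peakGap_pos k
  refine (norm_peak_le p k (by linarith)).trans ?_
  gcongr
  · exact peakWeight_le_peakGap hp k
  · linarith

lemma differentiableOn_peak (p : ℝ) (k : ℕ) : DifferentiableOn ℂ (peak p k) (ball 0 1) := by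
  intro z hz
  rw [mem_ball_zero_iff] at hz
  refine (DifferentiableAt.const_mul (DifferentiableAt.inv (by fun_prop) ?_) _)
    |>.differentiableWithinAt
  have := one_add_peakGap_sub_norm_le k z
  have := peakGap_pos k
  exact pow_ne_zero 2 (norm_pos_iff.1 (by linarith))

lemma norm_peak_ray_peakAngle (p : ℝ) (k : ℕ) (r : ℝ) :
    ‖peak p k (ray (peakAngle k) r)‖ = peakWeight p k / (1 + peakGap k - r) ^ 2 := by
  rw [norm_peak, ray_mul_exp_neg, sub_self, ray, Complex.ofReal_zero, zero_mul, Complex.exp_zero,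
    mul_one, ← Complex.ofReal_sub, Complex.norm_real, Real.norm_eq_abs, sq_abs, ← neg_sub, neg_sq]

lemma norm_peak_ray_le_of_le_abs_sin (p : ℝ) (k : ℕ) {θ δ : ℝ} (r : ℝ) (hδ : 0 < δ)
    (hθ : δ ≤ |Real.sin (θ - peakAngle k)|) :
    ‖peak p k (ray θ r)‖ ≤ peakWeight p k / δ ^ 2 := by
  rw [norm_peak, ray_mul_exp_neg]
  have := peakWeight_pos p k
  have := abs_sin_le_norm_ray_sub (θ - peakAngle k) r (a := 1 + peakGap k)
    (by linarith [peakGap_pos k])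
  gcongr
  linarith

lemma norm_peak_ray_le_of_awayFromPeak {p : ℝ} (hp : 1 ≤ p) {k : ℕ} {θ : ℝ} (r : ℝ)
    (hθ : AwayFromPeak θ k) :
    ‖peak p k (ray θ r)‖ ≤ 8 / 125 * 250⁻¹ ^ k := by
  refine (norm_peak_ray_le_of_le_abs_sin p k r (by positivity) hθ).trans ?_
  calc peakWeight p k / (2⁻¹ ^ k / 8) ^ 2 ≤ peakGap k / (2⁻¹ ^ k / 8) ^ 2 := by
        gcongr; exact peakWeight_le_peakGap hp k
    _ = 8 / 125 * 250⁻¹ ^ k := by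
        have h : (1000⁻¹ : ℝ) ^ k = 250⁻¹ ^ k * (2⁻¹ ^ k) ^ 2 := by
          rw [← pow_mul, mul_comm k 2, pow_mul, ← mul_pow]
          norm_num
        rw [peakGap, pow_succ, h]
        field_simp
        norm_num

lemma radialLp_peak_le_one {p : ℝ} (hp : 1 ≤ p) (k : ℕ) (θ : ℝ) :
    radialLp (ENNReal.ofReal p) (peak p k) θ ≤ 1 := by
  have hg := peakGap_pos k
  have hw := peakWeight_pos p k
  rw [radialLp_ofReal_eq_eLpNorm (by linarith)]
  calc eLpNorm (peak p k ∘ ray θ) (ENNReal.ofReal p) (volume.restrict (Ioo 0 1))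
      ≤ eLpNorm (peakWeight p k • fun r : ℝ => ((1 + peakGap k - r) ^ 2)⁻¹) (ENNReal.ofReal p)
          (volume.restrict (Ioo 0 1)) := by
        refine eLpNorm_mono_ae_real (ae_restrict_of_forall_mem measurableSet_Ioo fun r hr => ?_)
        have h := norm_peak_le p k (z := ray θ r) (by rw [norm_ray θ hr.1.le]; linarith [hr.2])
        rwa [norm_ray θ hr.1.le, div_eq_mul_inv] at h
    _ = ENNReal.ofReal (peakWeight p k) * eLpNorm (fun r : ℝ => ((1 + peakGap k - r) ^ 2)⁻¹)
          (ENNReal.ofReal p) (volume.restrict (Ioo 0 1)) := by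
        rw [eLpNorm_const_smul, Real.enorm_of_nonneg hw.le]
    _ ≤ ENNReal.ofReal (peakWeight p k) * ENNReal.ofReal (peakGap k ^ (1 / p - 2)) := by
        gcongr
        simpa using eLpNorm_inv_sub_sq_le hp (a := 1 + peakGap k) (by linarith)
    _ = 1 := by
        rw [← ofReal_mul hw.le, peakWeight, ← Real.rpow_add hg]
        simp

lemma quarter_le_radialLp_peak {p : ℝ} (hp : 0 < p) (k : ℕ) :
    4⁻¹ ≤ radialLp (ENNReal.ofReal p) (peak p k) (peakAngle k) := by
  have hg := peakGap_pos k
  have hg1 := peakGap_le_one k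
  set c := peakGap k ^ (-(1 / p)) / 4 with hc
  have hc0 : 0 ≤ c := by positivity
  have hw : peakWeight p k = 4 * c * peakGap k ^ 2 := by
    rw [hc, peakWeight, sub_eq_neg_add, Real.rpow_add hg, Real.rpow_two]
    ring
  -- on the last stretch `(1 - peakGap k, 1)` of its own ray the peak is at least `c`
  rw [radialLp_ofReal_eq_eLpNorm hp]
  calc (4⁻¹ : ℝ≥0∞)
      = eLpNorm (fun _ : ℝ => c) (ENNReal.ofReal p) (volume.restrict (Ioo (1 - peakGap k) 1)) := by
        rw [eLpNorm_const _ (by simpa using hp) (by simp [Measure.restrict_eq_zero, hg]),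
          Measure.restrict_apply_univ, Real.volume_Ioo, Real.enorm_of_nonneg hc0,
          toReal_ofReal hp.le, show (1 : ℝ) - (1 - peakGap k) = peakGap k by ring,
          ofReal_rpow_of_nonneg hg.le (by positivity),
          ← ofReal_mul hc0, hc, div_mul_eq_mul_div, ← Real.rpow_add hg]
        simp
    _ ≤ eLpNorm (peak p k ∘ ray (peakAngle k)) (ENNReal.ofReal p)
          (volume.restrict (Ioo (1 - peakGap k) 1)) := by
        refine eLpNorm_mono_ae (ae_restrict_of_forall_mem measurableSet_Ioo fun r hr => ?_)
        rw [Function.comp_apply, norm_peak_ray_peakAngle, Real.norm_of_nonneg hc0, hw,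
          le_div_iff₀ (pow_pos (by linarith [hr.2]) 2)]
        have : (1 + peakGap k - r) ^ 2 ≤ 4 * peakGap k ^ 2 := by nlinarith [hr.1, hr.2]
        nlinarith
    _ ≤ eLpNorm (peak p k ∘ ray (peakAngle k)) (ENNReal.ofReal p) (volume.restrict (Ioo 0 1)) :=
        eLpNorm_mono_measure _ (Measure.restrict_mono (Ioo_subset_Ioo (by linarith) le_rfl) le_rfl)

section PeakSeries

variable {p : ℝ} {α : ℕ → ℂ} {A : ℝ}

lemma norm_mul_peak_le (hp : 1 ≤ p) (hα : ∀ k, ‖α k‖ ≤ A) (k : ℕ) {z : ℂ} {R : ℝ} (hR : R < 1)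
    (hz : ‖z‖ ≤ R) : ‖α k * peak p k z‖ ≤ A * (peakGap k / (1 - R) ^ 2) := by
  rw [norm_mul]
  exact mul_le_mul (hα k) (norm_peak_le_of_norm_le hp k hR hz) (norm_nonneg _)
    ((norm_nonneg _).trans (hα k))

lemma differentiableOn_peakSeries (hp : 1 ≤ p) (hα : ∀ k, ‖α k‖ ≤ A) :
    DifferentiableOn ℂ (fun z => ∑' k, α k * peak p k z) (ball 0 1) := by
  intro z hz
  rw [mem_ball_zero_iff] at hz
  have hR : (‖z‖ + 1) / 2 < 1 := by linarith
  have hdiff : DifferentiableOn ℂ (fun w => ∑' k, α k * peak p k w) (ball 0 ((‖z‖ + 1) / 2)) :=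
    differentiableOn_tsum_of_summable_norm ((summable_peakGap.div_const _).mul_left A)
      (fun k => ((differentiableOn_peak p k).mono (ball_subset_ball hR.le)).const_mul (α k))
      isOpen_ball fun k w hw => norm_mul_peak_le hp hα k hR (mem_ball_zero_iff.1 hw).le
  exact (hdiff.differentiableAt (isOpen_ball.mem_nhds (mem_ball_zero_iff.2 (by linarith))))
    |>.differentiableWithinAt

lemma norm_peakSeries_sub_le (hp : 1 ≤ p) (hα : ∀ k, ‖α k‖ ≤ A) {θ r : ℝ} (hr : r ∈ Ioo (0 : ℝ) 1)
    {j : ℕ} (haway : ∀ k ≠ j, AwayFromPeak θ k) :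
    ‖∑' k, α k * peak p k (ray θ r) - α j * peak p j (ray θ r)‖ ≤ A / 15 := by
  have hA : 0 ≤ A := (norm_nonneg _).trans (hα 0)
  have hz : ‖ray θ r‖ < 1 := by rw [norm_ray θ hr.1.le]; exact hr.2
  have hsum : Summable fun k => α k * peak p k (ray θ r) :=
    .of_norm_bounded ((summable_peakGap.div_const _).mul_left A)
      fun k => norm_mul_peak_le hp hα k hz le_rfl
  have hg := ((hasSum_geometric_of_lt_one (r := (250⁻¹ : ℝ)) (by norm_num) (by norm_num)).mul_left
    (8 / 125)).mul_left A
  refine (norm_tsum_sub_le_of_forall_ne hsum hg j (by positivity) fun k hk => ?_).trans ?_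
  · rw [norm_mul]
    exact mul_le_mul (hα k) (norm_peak_ray_le_of_awayFromPeak hp r (haway k hk))
      (norm_nonneg _) hA
  · norm_num
    linarith

lemma radialLp_peakSeries_le (hp : 1 ≤ p) (hα : ∀ k, ‖α k‖ ≤ A) (θ : ℝ) :
    radialLp (ENNReal.ofReal p) (fun z => ∑' k, α k * peak p k z) θ ≤ ENNReal.ofReal (2 * A) := by
  have hA : 0 ≤ A := (norm_nonneg _).trans (hα 0)
  obtain ⟨j, hj⟩ := exists_forall_ne_awayFromPeak θ
  calc radialLp (ENNReal.ofReal p) (fun z => ∑' k, α k * peak p k z) θ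
      ≤ radialLp (ENNReal.ofReal p) (fun z => α j * peak p j z) θ + ENNReal.ofReal (A / 15) :=
        radialLp_le_radialLp_add hp (differentiableOn_peakSeries hp hα).continuousOn
          ((differentiableOn_peak p j).const_mul _).continuousOn
          fun r hr => norm_peakSeries_sub_le hp hα hr hj
    _ = ‖α j‖ₑ * radialLp (ENNReal.ofReal p) (peak p j) θ + ENNReal.ofReal (A / 15) := by
        rw [radialLp_ofReal_const_mul (by linarith)]
    _ ≤ ENNReal.ofReal A * 1 + ENNReal.ofReal (A / 15) := by
        gcongr
        · rw [← ofReal_norm]; exact ofReal_le_ofReal (hα j)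
        · exact radialLp_peak_le_one hp j θ
    _ ≤ ENNReal.ofReal (2 * A) := by
        rw [mul_one, ← ofReal_add hA (by positivity)]
        exact ofReal_le_ofReal (by linarith)

lemma ofReal_le_radialLp_peakSeries (hp : 1 ≤ p) (hα : ∀ k, ‖α k‖ ≤ A) {j : ℕ}
    (hj : A / 2 ≤ ‖α j‖) :
    ENNReal.ofReal (A / 20)
      ≤ radialLp (ENNReal.ofReal p) (fun z => ∑' k, α k * peak p k z) (peakAngle j) := by
  have hA : 0 ≤ A := (norm_nonneg _).trans (hα 0)
  have haway : ∀ k ≠ j, AwayFromPeak (peakAngle j) k := fun k hk => awayFromPeak_peakAngle hk.symm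
  have hpeak : ENNReal.ofReal (A / 8)
      ≤ radialLp (ENNReal.ofReal p) (fun z => α j * peak p j z) (peakAngle j) := by
    rw [radialLp_ofReal_const_mul (by linarith)]
    calc ENNReal.ofReal (A / 8) = ENNReal.ofReal (A / 2) * 4⁻¹ := by
          rw [show (4⁻¹ : ℝ≥0∞) = ENNReal.ofReal 4⁻¹ by simp, ← ofReal_mul (by positivity)]
          ring_nf
      _ ≤ ‖α j‖ₑ * radialLp (ENNReal.ofReal p) (peak p j) (peakAngle j) := by
          gcongr
          · rw [← ofReal_norm]; exact ofReal_le_ofReal hj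
          · exact quarter_le_radialLp_peak (by linarith) j
  have hsplit := radialLp_le_radialLp_add hp
    ((differentiableOn_peak p j).const_mul (α j)).continuousOn
    (differentiableOn_peakSeries hp hα).continuousOn
    fun r hr => (norm_sub_rev _ _).trans_le (norm_peakSeries_sub_le hp hα hr haway)
  refine ENNReal.le_of_add_le_add_right ofReal_ne_top ((le_trans ?_ hpeak).trans hsplit)
  rw [← ofReal_add (by positivity) (by positivity)]
  exact ofReal_le_ofReal (by linarith)

end PeakSeries

/-- For `1 ≤ p < ∞`, there is a bounded linear embedding of `ℓ^∞` into `RM(p,∞)`: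
a sequence of holomorphic functions `f_k` such that for every bounded sequence `α`,
`F_α(z) = Σ_k α_k f_k(z)` is holomorphic on `𝔻` and `c ‖α‖_∞ ≤ ρ_{p,∞}(F_α) ≤ C ‖α‖_∞`.
In particular `RM(p,∞)` contains an isomorphic copy of `ℓ^∞` and is non-separable. -/
theorem stmt_14 (p : ℝ) (hp : 1 ≤ p) :
    ∃ (f : ℕ → ℂ → ℂ) (c C : ℝ), 0 < c ∧ 0 < C ∧
      (∀ k, DifferentiableOn ℂ (f k) (Metric.ball (0 : ℂ) 1)) ∧
      ∀ α : lp (fun _ : ℕ => ℂ) ⊤,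
        DifferentiableOn ℂ (fun z => ∑' k, α k * f k z) (Metric.ball (0 : ℂ) 1) ∧
        ENNReal.ofReal (c * ‖α‖)
            ≤ rhoE (ENNReal.ofReal p) ⊤ (fun z => ∑' k, α k * f k z) ∧
        rhoE (ENNReal.ofReal p) ⊤ (fun z => ∑' k, α k * f k z)
            ≤ ENNReal.ofReal (C * ‖α‖) := by
  refine ⟨peak p, 1 / 20, 2, by norm_num, by norm_num, differentiableOn_peak p, fun α => ?_⟩
  have hα : ∀ k, ‖α k‖ ≤ ‖α‖ := lp.norm_apply_le_norm ENNReal.top_ne_zero α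
  refine ⟨differentiableOn_peakSeries hp hα, ?_, ?_⟩
  · obtain ⟨j, hj⟩ := exists_half_norm_le_norm_apply α
    rw [rhoE_top, one_div_mul_eq_div]
    exact le_iSup_of_le ⟨peakAngle j, peakAngle_mem_Ico j⟩ (ofReal_le_radialLp_peakSeries hp hα hj)
  · rw [rhoE_top]
    exact iSup_le fun θ => radialLp_peakSeries_le hp hα θ
end
end
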